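/- arXiv:2311.04688 — 2 statements merged into one kernel-verified Lean document; each statement's English description precedes it below -/
import Mathlib

section
/- Let C_1, C_2 be ideals of ℤ_{p^a}[x]/⟨x^n−1⟩ and ℤ_{q^b}[x]/⟨x^n−1⟩ for distinct primes p, q. If C_1 is a free ℤ_{p^a}-module of rank r_1 and C_2 is a free ℤ_{q^b}-module of rank r_2 with r_1 ≠ r_2, then the CRT code CRT(C_1, C_2) ⊆ ℤ_{p^a q^b}[x]/⟨x^n−1⟩ is not a free ℤ_{p^a q^b}-module. -/
/-
Reduction modulo `p^a` maps the CRT code `C` onto `C₁` with kernel `p^a • C`: if `x ∈ C` vanishes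
modulo `p^a`, then `q^b • x = 0`, so `x = p^a • u • x` for an inverse `u` of `p^a` modulo `q^b`.
Hence the reduction of a basis of `C` is a basis of `C₁` and `finrank C₁ = finrank C`.
Symmetrically `finrank C₂ = finrank C`, so a free `C` forces `r₁ = r₂`.
-/

open Polynomial

/-- Coefficientwise reduction `ℤ_m[x]/⟨x^n - 1⟩ → ℤ_k[x]/⟨x^n - 1⟩` for `k ∣ m`. -/
noncomputable def redQuot (m k n : ℕ) (h : k ∣ m) :
    (Polynomial (ZMod m) ⧸ (Ideal.span {(X : Polynomial (ZMod m)) ^ n - 1})) →+*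
    (Polynomial (ZMod k) ⧸ (Ideal.span {(X : Polynomial (ZMod k)) ^ n - 1})) :=
  Ideal.Quotient.lift _
    ((Ideal.Quotient.mk _).comp (Polynomial.mapRingHom (ZMod.castHom h (ZMod k))))
    (fun a ha => by
      rw [Ideal.mem_span_singleton] at ha
      obtain ⟨c, rfl⟩ := ha
      simp only [RingHom.comp_apply, Polynomial.coe_mapRingHom, Polynomial.map_mul,
        Polynomial.map_sub, Polynomial.map_pow, Polynomial.map_X, Polynomial.map_one]
      rw [Ideal.Quotient.eq_zero_iff_mem, Ideal.mem_span_singleton]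
      exact dvd_mul_right _ _)

local notation "ℛ[" m ", " n "]" =>
  Polynomial (ZMod m) ⧸ Ideal.span {(X : Polynomial (ZMod m)) ^ n - 1}

section SurjectiveSemilinear

open scoped Pointwise

variable {R R' M M' ι : Type*} [CommRing R] [CommRing R'] [AddCommGroup M] [AddCommGroup M']
  [Module R M] [Module R' M'] {σ : R →+* R'} [RingHomSurjective σ]

theorem Module.Basis.span_range_comp_of_surjective (b : Module.Basis ι R M) {f : M →ₛₗ[σ] M'}
    (hf : Function.Surjective f) : Submodule.span R' (Set.range (f ∘ b)) = ⊤ := by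
  rw [Set.range_comp, ← Submodule.map_span, b.span_eq, Submodule.map_top,
    LinearMap.range_eq_top.mpr hf]

theorem Module.Basis.linearIndependent_comp_of_ker_le_smul_top (b : Module.Basis ι R M)
    (f : M →ₛₗ[σ] M') {t : R} (ht : σ t = 0) (hker : LinearMap.ker f ≤ t • ⊤) :
    LinearIndependent R' (f ∘ b) := by
  rw [linearIndependent_iff]
  intro l hl
  obtain ⟨m, rfl⟩ := Finsupp.mapRange_surjective σ (map_zero σ) σ.surjective l
  have hfm : b.repr.symm m ∈ LinearMap.ker f := by
    rw [LinearMap.mem_ker, ← hl, b.repr_symm_apply, Finsupp.linearCombination_apply,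
      Finsupp.linearCombination_apply, map_finsuppSum, Finsupp.sum_mapRange_index (by simp)]
    exact Finsupp.sum_congr fun i _ => map_smulₛₗ f _ _
  obtain ⟨y, -, hy⟩ := (Submodule.mem_smul_pointwise_iff_exists _ _ _).1 (hker hfm)
  have hm : m = t • b.repr y := by rw [← b.repr.apply_symm_apply m, ← hy, map_smul]
  ext i
  simp [hm, ht]

theorem Module.finrank_eq_of_surjective_semilinear [Nontrivial R'] [Module.Free R M]
    {f : M →ₛₗ[σ] M'} (hf : Function.Surjective f) {t : R} (ht : σ t = 0)
    (hker : LinearMap.ker f ≤ t • ⊤) : Module.finrank R' M' = Module.finrank R M := by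
  have := σ.domain_nontrivial
  let b := Module.Free.chooseBasis R M
  rw [Module.finrank_eq_nat_card_basis b, Module.finrank_eq_nat_card_basis
    (Module.Basis.mk (b.linearIndependent_comp_of_ker_le_smul_top f ht hker)
      (b.span_range_comp_of_surjective hf).ge)]

end SurjectiveSemilinear

theorem ZMod.ker_castHom {m k : ℕ} (h : k ∣ m) :
    RingHom.ker (ZMod.castHom h (ZMod k)) = Ideal.span {(k : ZMod m)} := by
  refine le_antisymm (fun x hx => ?_) ?_
  · obtain ⟨j, rfl⟩ := ZMod.intCast_surjective x
    rw [RingHom.mem_ker, map_intCast, ZMod.intCast_zmod_eq_zero_iff_dvd] at hx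
    obtain ⟨c, rfl⟩ := hx
    exact Ideal.mem_span_singleton.2 ⟨c, by push_cast; rfl⟩
  · rw [Ideal.span_le, Set.singleton_subset_iff, SetLike.mem_coe, RingHom.mem_ker, map_natCast,
      ZMod.natCast_self]

section redQuot

variable {m k : ℕ} (n : ℕ) (h : k ∣ m)

theorem redQuot_mk (f : (ZMod m)[X]) :
    redQuot m k n h (Ideal.Quotient.mk _ f) =
      Ideal.Quotient.mk _ (f.map (ZMod.castHom h (ZMod k))) :=
  rfl

theorem redQuot_smul (c : ZMod m) (z : ℛ[m, n]) :
    redQuot m k n h (c • z) = ZMod.castHom h (ZMod k) c • redQuot m k n h z := by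
  obtain ⟨f, rfl⟩ := Ideal.Quotient.mk_surjective z
  rw [← Ideal.Quotient.mkₐ_eq_mk (ZMod m), ← map_smul, Ideal.Quotient.mkₐ_eq_mk, redQuot_mk,
    redQuot_mk, Polynomial.map_smul, ← Ideal.Quotient.mkₐ_eq_mk (ZMod k), map_smul]

theorem redQuot_surjective : Function.Surjective (redQuot m k n h) := by
  intro y
  obtain ⟨f, rfl⟩ := Ideal.Quotient.mk_surjective y
  obtain ⟨F, rfl⟩ := Polynomial.map_surjective _ (ZMod.castHom_surjective h) f
  exact ⟨_, redQuot_mk n h F⟩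

theorem redQuot_eq_zero_iff (z : ℛ[m, n]) :
    redQuot m k n h z = 0 ↔ ∃ y, z = (k : ZMod m) • y := by
  refine ⟨fun hz => ?_, ?_⟩
  · obtain ⟨f, rfl⟩ := Ideal.Quotient.mk_surjective z
    rw [redQuot_mk, Ideal.Quotient.eq_zero_iff_mem, Ideal.mem_span_singleton'] at hz
    obtain ⟨g, hg⟩ := hz
    obtain ⟨G, rfl⟩ := Polynomial.map_surjective _ (ZMod.castHom_surjective h) g
    have hker : f - G * (X ^ n - 1) ∈ RingHom.ker (mapRingHom (ZMod.castHom h (ZMod k))) := by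
      simp [hg]
    rw [ker_mapRingHom, ZMod.ker_castHom, Ideal.map_span, Set.image_singleton,
      Ideal.mem_span_singleton'] at hker
    obtain ⟨D, hD⟩ := hker
    refine ⟨Ideal.Quotient.mk _ D, ?_⟩
    rw [← Ideal.Quotient.mkₐ_eq_mk (ZMod m), ← map_smul, smul_eq_C_mul, Ideal.Quotient.mkₐ_eq_mk,
      Ideal.Quotient.eq, Ideal.mem_span_singleton']
    exact ⟨G, by rw [mul_comm (C _), hD]; ring⟩
  · rintro ⟨y, rfl⟩
    rw [redQuot_smul, map_natCast, ZMod.natCast_self, zero_smul]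

noncomputable def redQuotₛₗ : ℛ[m, n] →ₛₗ[ZMod.castHom h (ZMod k)] ℛ[k, n] where
  toFun := redQuot m k n h
  map_add' := map_add _
  map_smul' := redQuot_smul n h

instance : RingHomSurjective (ZMod.castHom h (ZMod k)) := ⟨ZMod.castHom_surjective h⟩

end redQuot

section CRT

variable {N k l : ℕ} (n : ℕ) (hk : k ∣ N) (hl : l ∣ N)

theorem smul_eq_zero_of_redQuot_eq_zero (hN : N = k * l) {z : ℛ[N, n]}
    (hz : redQuot N k n hk z = 0) : (l : ZMod N) • z = 0 := by
  obtain ⟨y, rfl⟩ := (redQuot_eq_zero_iff n hk z).1 hz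
  rw [smul_smul, ← Nat.cast_mul, mul_comm, ← hN, ZMod.natCast_self, zero_smul]

theorem exists_smul_smul_eq_of_redQuot_eq_zero (hkl : k.Coprime l) (hN : N = k * l)
    {z : ℛ[N, n]} (hz : redQuot N k n hk z = 0) : ∃ c : ZMod N, (k : ZMod N) • c • z = z := by
  obtain ⟨u, v, huv⟩ := hkl.cast (R := ZMod N)
  refine ⟨u, ?_⟩
  calc (k : ZMod N) • u • z = u • (k : ZMod N) • z + v • (l : ZMod N) • z := by
        rw [smul_eq_zero_of_redQuot_eq_zero n hk hN hz, smul_zero, add_zero, smul_comm]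
    _ = z := by rw [smul_smul, smul_smul, ← add_smul, huv, one_smul]

theorem exists_redQuot_eq_and_redQuot_eq_zero (hkl : k.Coprime l) (y : ℛ[k, n]) :
    ∃ z, redQuot N k n hk z = y ∧ redQuot N l n hl z = 0 := by
  obtain ⟨u, v, huv⟩ := hkl.cast (R := ZMod N)
  obtain ⟨z, rfl⟩ := redQuot_surjective n hk y
  refine ⟨(v * l : ZMod N) • z, ?_, ?_⟩
  · have hvl : ZMod.castHom hk (ZMod k) (v * l) = 1 := by
      have := congrArg (ZMod.castHom hk (ZMod k)) huv
      rwa [map_add, map_mul, map_natCast, ZMod.natCast_self, mul_zero, zero_add, map_one] at this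
    rw [redQuot_smul, hvl, one_smul]
  · rw [redQuot_smul, map_mul, map_natCast, ZMod.natCast_self, mul_zero, zero_smul]

open scoped Pointwise in
theorem finrank_restrictScalars_eq_of_mem_iff [Fact (1 < k)] (hkl : k.Coprime l)
    (hN : N = k * l) {C : Ideal ℛ[N, n]} {C' : Ideal ℛ[k, n]} {C'' : Ideal ℛ[l, n]}
    (hC : ∀ x, x ∈ C ↔ redQuot N k n hk x ∈ C' ∧ redQuot N l n hl x ∈ C'')
    [Module.Free (ZMod N) (C.restrictScalars (ZMod N))] :
    Module.finrank (ZMod k) (C'.restrictScalars (ZMod k)) =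
      Module.finrank (ZMod N) (C.restrictScalars (ZMod N)) := by
  let f : C.restrictScalars (ZMod N) →ₛₗ[ZMod.castHom hk (ZMod k)]
      C'.restrictScalars (ZMod k) :=
    (redQuotₛₗ n hk).restrict fun x hx => ((hC x).1 hx).1
  refine Module.finrank_eq_of_surjective_semilinear (f := f) (t := (k : ZMod N)) ?_ ?_ ?_
  · rintro ⟨y, hy⟩
    obtain ⟨z, hzk, hzl⟩ := exists_redQuot_eq_and_redQuot_eq_zero n hk hl hkl y
    exact ⟨⟨z, (hC z).2 ⟨hzk ▸ hy, hzl ▸ C''.zero_mem⟩⟩, Subtype.ext hzk⟩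
  · rw [map_natCast, ZMod.natCast_self]
  · rintro ⟨x, hx⟩ hfx
    obtain ⟨c, hc⟩ :=
      exists_smul_smul_eq_of_redQuot_eq_zero n hk hkl hN (congrArg Subtype.val hfx)
    exact (Submodule.mem_smul_pointwise_iff_exists _ _ _).2
      ⟨⟨c • x, (C.restrictScalars (ZMod N)).smul_mem c hx⟩, trivial, Subtype.ext hc⟩

end CRT

theorem crt_code_not_free_general (p q n a b r₁ r₂ : ℕ) (hp : p.Prime) (hq : q.Prime) (hpq : p ≠ q)
    (ha : 0 < a) (hb : 0 < b)
    (C₁ : Ideal (Polynomial (ZMod (p ^ a)) ⧸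
      (Ideal.span {(X : Polynomial (ZMod (p ^ a))) ^ n - 1})))
    (C₂ : Ideal (Polynomial (ZMod (q ^ b)) ⧸
      (Ideal.span {(X : Polynomial (ZMod (q ^ b))) ^ n - 1})))
    (hrank₁ : Module.finrank (ZMod (p ^ a)) (C₁.restrictScalars (ZMod (p ^ a))) = r₁)
    (hrank₂ : Module.finrank (ZMod (q ^ b)) (C₂.restrictScalars (ZMod (q ^ b))) = r₂)
    (hr : r₁ ≠ r₂)
    (C : Ideal (Polynomial (ZMod (p ^ a * q ^ b)) ⧸
      (Ideal.span {(X : Polynomial (ZMod (p ^ a * q ^ b))) ^ n - 1})))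
    (hC : ∀ x, x ∈ C ↔
      redQuot (p ^ a * q ^ b) (p ^ a) n (dvd_mul_right _ _) x ∈ C₁ ∧
      redQuot (p ^ a * q ^ b) (q ^ b) n (dvd_mul_left _ _) x ∈ C₂) :
    ¬ Module.Free (ZMod (p ^ a * q ^ b)) (C.restrictScalars (ZMod (p ^ a * q ^ b))) := by
  intro hfree
  have : Fact (1 < p ^ a) := ⟨Nat.one_lt_pow ha.ne' hp.one_lt⟩
  have : Fact (1 < q ^ b) := ⟨Nat.one_lt_pow hb.ne' hq.one_lt⟩
  have hco : (p ^ a).Coprime (q ^ b) := Nat.Coprime.pow a b ((Nat.coprime_primes hp hq).2 hpq)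
  apply hr
  rw [← hrank₁, ← hrank₂, finrank_restrictScalars_eq_of_mem_iff n _ _ hco rfl hC,
    finrank_restrictScalars_eq_of_mem_iff n _ _ hco.symm (mul_comm _ _)
      fun x => (hC x).trans and_comm]

/-- if `C₁ ⊆ ℤ_{p^a}[x]/⟨x^n−1⟩` and `C₂ ⊆ ℤ_{q^b}[x]/⟨x^n−1⟩` are ideals that
are free modules of different ranks `r₁ ≠ r₂`, then `CRT(C₁,C₂)` is not a free
`ℤ_{p^a q^b}`-module. -/
theorem crt_code_not_free (p q n a b r₁ r₂ : ℕ) (hp : p.Prime) (hq : q.Prime) (hpq : p ≠ q)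
    (ha : 0 < a) (hb : 0 < b)
    (C₁ : Ideal (Polynomial (ZMod (p ^ a)) ⧸
      (Ideal.span {(X : Polynomial (ZMod (p ^ a))) ^ n - 1})))
    (C₂ : Ideal (Polynomial (ZMod (q ^ b)) ⧸
      (Ideal.span {(X : Polynomial (ZMod (q ^ b))) ^ n - 1})))
    (hfree₁ : Module.Free (ZMod (p ^ a)) (C₁.restrictScalars (ZMod (p ^ a))))
    (hrank₁ : Module.finrank (ZMod (p ^ a)) (C₁.restrictScalars (ZMod (p ^ a))) = r₁)
    (hfree₂ : Module.Free (ZMod (q ^ b)) (C₂.restrictScalars (ZMod (q ^ b))))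
    (hrank₂ : Module.finrank (ZMod (q ^ b)) (C₂.restrictScalars (ZMod (q ^ b))) = r₂)
    (hr : r₁ ≠ r₂)
    (C : Ideal (Polynomial (ZMod (p ^ a * q ^ b)) ⧸
      (Ideal.span {(X : Polynomial (ZMod (p ^ a * q ^ b))) ^ n - 1})))
    (hC : ∀ x, x ∈ C ↔
      redQuot (p ^ a * q ^ b) (p ^ a) n (dvd_mul_right _ _) x ∈ C₁ ∧
      redQuot (p ^ a * q ^ b) (q ^ b) n (dvd_mul_left _ _) x ∈ C₂) :
    ¬ Module.Free (ZMod (p ^ a * q ^ b)) (C.restrictScalars (ZMod (p ^ a * q ^ b))) :=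
  crt_code_not_free_general p q n a b r₁ r₂ hp hq hpq ha hb C₁ C₂ hrank₁ hrank₂ hr C hC
end

section
/- Let p be a prime, s ≥ 1, and n coprime to p. Every ideal C of ℤ_{p^s}[x]/⟨x^n − 1⟩ admits a generating set of the form {f_0, p f_1, …, p^{s-1} f_{s-1}} where each f_i is a monic polynomial and f_{s-1} | f_{s-2} | ⋯ | f_1 | f_0 | x^n − 1 in ℤ_{p^s}[x]. -/
/-!
Let `R = ℤ/p^s`, let `φ : R → 𝔽_p` be reduction, and let `J ⊆ R[x]` be the preimage of `C`. The
ideals `(J : p^i)` increase with `i` and contain `x^n - 1`, so their images in `𝔽_p[x]` are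
generated by monic divisors `g_0, g_1, …` of `x^n - 1` with `g_j ∣ g_i` for `i ≤ j`. Since
`x^n - 1` is separable over `𝔽_p`, Hensel's lemma lifts each `g_i` to a monic factor `f_i` of
`x^n - 1` over `R` that is coprime to its cofactor. For such a factor, lying in an ideal that
contains `x^n - 1` can be tested modulo `p` (the error term is nilpotent), which gives
`p^i f_i ∈ J` and `f_j ∣ f_i`. Finally, if `p^i g ∈ J` then `g = f_i t + p r` with `p^{i+1} r ∈ J`,
so descending induction on `i`, starting from `p^s = 0`, shows that the `p^i f_i` generate `J`.
-/

open Polynomial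

theorem Ideal.mem_of_isCoprime_of_isNilpotent_sub {S : Type*} [CommRing S] {I : Ideal S}
    {f e g : S} (hfe : IsCoprime f e) (hfeI : f * e ∈ I) (hg : g ∈ I)
    (hgf : IsNilpotent (g - f)) : f ∈ I := by
  obtain ⟨α, β, hαβ⟩ := hfe
  have hunit : IsUnit (1 + α * (g - f)) :=
    ((Commute.all _ _).isNilpotent_mul_left hgf).isUnit_one_add
  have hmem : f * (1 + α * (g - f)) ∈ I := by
    have hexpand : f * (1 + α * (g - f)) = (α * f) * g + β * (f * e) := by
      linear_combination (-f) * hαβ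
    rw [hexpand]
    exact I.add_mem (I.mul_mem_left _ hg) (I.mul_mem_left _ hfeI)
  exact (I.mul_unit_mem_iff_mem hunit).mp hmem

namespace Polynomial

theorem exists_monic_lift_of_isCoprime {R K : Type*} [CommRing R] [CommRing K]
    [Nontrivial K] (φ : R →+* K) (hφ : Function.Surjective φ)
    (hker : IsNilpotent (RingHom.ker φ)) {h : R[X]} (hh : h.Monic) {A B : K[X]}
    (hA : A.Monic) (hB : B.Monic) (hAB : IsCoprime A B) (hfac : h.map φ = A * B) :
    ∃ a b : R[X], a.Monic ∧ b.Monic ∧ h = a * b ∧ IsCoprime a b ∧ a.map φ = A ∧ b.map φ = B := by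
  open UniversalCoprimeFactorizationRing in
  let _ := φ.toAlgebra
  have hdeg : h.natDegree = A.natDegree + B.natDegree := by
    rw [← hA.natDegree_mul hB, ← hfac, hh.natDegree_map]
  let H : MonicDegreeEq R _ := .mk h hh hdeg
  let F := (homEquiv K _ _ rfl H).symm ⟨(.mk A hA rfl, .mk B hB rfl), hfac.symm, hAB⟩
  -- The universal coprime factorization ring is étale over `R`, so the factorization over `K`
  -- lifts along the nilpotent kernel of `φ`.
  let L := Algebra.FormallySmooth.liftOfSurjective F (Algebra.ofId R K) hφ hker
  have hL : (Algebra.ofId R K).comp L = F := Algebra.FormallySmooth.comp_liftOfSurjective ..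
  have h1 := homEquiv_comp_fst R _ _ rfl H L (Algebra.ofId R K)
  have h2 := homEquiv_comp_snd R _ _ rfl H L (Algebra.ofId R K)
  rw [hL, Equiv.apply_symm_apply] at h1 h2
  refine ⟨_, _, (homEquiv R _ _ rfl H L).1.1.monic, (homEquiv R _ _ rfl H L).1.2.monic,
    ?_, (homEquiv R _ _ rfl H L).2.2, congr($(h1).1).symm, congr($(h2).1).symm⟩
  simpa [H, MonicDegreeEq.mk] using (homEquiv R _ _ rfl H L).2.1.symm

variable {R K : Type*} [CommRing R] [Field K] {φ : R →+* K} {π : R}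

theorem ker_mapRingHom_eq_span_C (hker : RingHom.ker φ = Ideal.span {π}) :
    RingHom.ker (mapRingHom φ) = Ideal.span {C π} := by
  rw [ker_mapRingHom, hker, Ideal.map_span, Set.image_singleton]

theorem isNilpotent_sub_of_map_eq (hker : RingHom.ker φ = Ideal.span {π}) (hπ : IsNilpotent π)
    {f g : R[X]} (h : f.map φ = g.map φ) : IsNilpotent (f - g) := by
  have hmem : f - g ∈ RingHom.ker (mapRingHom φ) := by
    rw [RingHom.mem_ker, map_sub, coe_mapRingHom, h, sub_self]
  obtain ⟨r, hr⟩ := Ideal.mem_span_singleton'.mp (ker_mapRingHom_eq_span_C hker ▸ hmem)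
  rw [← hr]
  exact (Commute.all _ _).isNilpotent_mul_left (hπ.map C)

theorem mem_of_isCoprime_of_map_mem (hφ : Function.Surjective φ)
    (hker : RingHom.ker φ = Ideal.span {π}) (hπ : IsNilpotent π) {I : Ideal R[X]} {f e : R[X]}
    (hfe : IsCoprime f e) (hfeI : f * e ∈ I) (hf : f.map φ ∈ I.map (mapRingHom φ)) : f ∈ I := by
  obtain ⟨g, hg, hgf⟩ := (Ideal.mem_map_iff_of_surjective _ (map_surjective φ hφ)).mp hf
  exact Ideal.mem_of_isCoprime_of_isNilpotent_sub hfe hfeI hg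
    (isNilpotent_sub_of_map_eq hker hπ hgf)

theorem dvd_of_isCoprime_of_map_dvd (hφ : Function.Surjective φ)
    (hker : RingHom.ker φ = Ideal.span {π}) (hπ : IsNilpotent π) {f e g : R[X]}
    (hfe : IsCoprime f e) (hg : g ∣ f * e) (h : g.map φ ∣ f.map φ) : g ∣ f := by
  refine Ideal.mem_span_singleton.mp (mem_of_isCoprime_of_map_mem hφ hker hπ hfe
    (Ideal.mem_span_singleton.mpr hg) ?_)
  rwa [Ideal.map_span, Set.image_singleton, Ideal.mem_span_singleton]

theorem exists_monic_isCoprime_lift_of_mem (hφ : Function.Surjective φ)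
    (hker : RingHom.ker φ = Ideal.span {π}) (hπ : IsNilpotent π) {M : R[X]} (hM : M.Monic)
    (hsep : (M.map φ).Separable) {I : Ideal R[X]} (hMI : M ∈ I) :
    ∃ f e : R[X], f.Monic ∧ M = f * e ∧ IsCoprime f e ∧
      I.map (mapRingHom φ) = Ideal.span {f.map φ} := by
  have hMbar : M.map φ ∈ I.map (mapRingHom φ) := Ideal.mem_map_of_mem _ hMI
  obtain ⟨G, hG, hIG⟩ := exists_monic_span _
    ((Submodule.ne_bot_iff _).mpr ⟨_, hMbar, (hM.map φ).ne_zero⟩)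
  rw [hIG, Ideal.mem_span_singleton] at hMbar
  obtain ⟨T, hT⟩ := hMbar
  have hT_monic : T.Monic := hG.of_mul_monic_left (hT ▸ hM.map φ)
  have hker_nil : IsNilpotent (RingHom.ker φ) := by
    obtain ⟨n, hn⟩ := hπ
    refine ⟨n, ?_⟩
    rw [hker, Ideal.span_singleton_pow, hn, Ideal.zero_eq_bot, Ideal.span_singleton_eq_bot]
  obtain ⟨f, e, hf, -, hMfe, hfe, hfG, -⟩ := exists_monic_lift_of_isCoprime φ hφ hker_nil hM hG
    hT_monic (hT ▸ hsep).isCoprime hT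
  exact ⟨f, e, hf, hMfe, hfe, hfG ▸ hIG⟩

theorem eq_span_of_map_dvd (hφ : Function.Surjective φ) (hker : RingHom.ker φ = Ideal.span {π})
    {s : ℕ} (hπ : π ^ s = 0) {J : Ideal R[X]} {f : ℕ → R[X]} (hfJ : ∀ i, C π ^ i * f i ∈ J)
    (hf : ∀ i g, C π ^ i * g ∈ J → (f i).map φ ∣ g.map φ) :
    J = Ideal.span (Set.range fun i : Fin s => C π ^ (i : ℕ) * f i) := by
  set S := Ideal.span (Set.range fun i : Fin s => C π ^ (i : ℕ) * f i)
  refine le_antisymm ?_ (Ideal.span_le.mpr (Set.range_subset_iff.mpr fun i => hfJ i))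
  suffices h : ∀ i ≤ s, ∀ g, C π ^ i * g ∈ J → C π ^ i * g ∈ S by
    intro g hg
    simpa using h 0 (Nat.zero_le s) g (by simpa using hg)
  intro i hi
  induction hi using Nat.decreasingInduction with
  | self =>
    intro g _
    rw [← C_pow, hπ, C_0, zero_mul]
    exact S.zero_mem
  | of_succ i his ih =>
    intro g hg
    obtain ⟨T, hT⟩ := hf i g hg
    obtain ⟨t, rfl⟩ := map_surjective φ hφ T
    have hker' : g - f i * t ∈ RingHom.ker (mapRingHom φ) := by
      rw [RingHom.mem_ker, map_sub, map_mul, coe_mapRingHom, hT, sub_self]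
    obtain ⟨r, hr⟩ := Ideal.mem_span_singleton.mp (ker_mapRingHom_eq_span_C hker ▸ hker')
    have hrJ : C π ^ (i + 1) * r ∈ J := by
      have hr' : C π ^ (i + 1) * r = C π ^ i * g - (C π ^ i * f i) * t := by
        linear_combination -(C π ^ i) * hr
      exact hr' ▸ J.sub_mem hg (J.mul_mem_right t (hfJ i))
    have hsplit : C π ^ i * g = (C π ^ i * f i) * t + C π ^ (i + 1) * r := by
      linear_combination (C π ^ i) * hr
    rw [hsplit]
    exact S.add_mem (S.mul_mem_right _ (Ideal.subset_span ⟨⟨i, his⟩, rfl⟩)) (ih r hrJ)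

theorem exists_monic_dvd_chain_span_eq (hφ : Function.Surjective φ)
    (hker : RingHom.ker φ = Ideal.span {π}) {s : ℕ} (hπ : π ^ s = 0) {M : R[X]} (hM : M.Monic)
    (hsep : (M.map φ).Separable) {J : Ideal R[X]} (hMJ : M ∈ J) :
    ∃ f : ℕ → R[X], (∀ i, (f i).Monic) ∧ (∀ i j, i ≤ j → f j ∣ f i) ∧ (∀ i, f i ∣ M) ∧
      J = Ideal.span (Set.range fun i : Fin s => C π ^ (i : ℕ) * f i) := by
  have hπ' : IsNilpotent π := ⟨s, hπ⟩
  let tor : ℕ → Ideal R[X] := fun i => J.colon (Ideal.span {C π ^ i})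
  have mem_tor : ∀ {i g}, g ∈ tor i ↔ C π ^ i * g ∈ J := by
    intro i g
    rw [Ideal.mem_colon_span_singleton, mul_comm]
  have hM_tor : ∀ i, M ∈ tor i := fun i => mem_tor.mpr (J.mul_mem_left _ hMJ)
  have tor_mono : Monotone tor := fun i j hij g hg => by
    rw [mem_tor, ← Nat.sub_add_cancel hij, pow_add, mul_assoc]
    exact J.mul_mem_left _ (mem_tor.mp hg)
  choose f e hf hMfe hfe hspan using
    fun i => exists_monic_isCoprime_lift_of_mem hφ hker hπ' hM hsep (hM_tor i)
  have hf_tor : ∀ i, f i ∈ tor i := fun i =>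
    mem_of_isCoprime_of_map_mem hφ hker hπ' (hfe i) (hMfe i ▸ hM_tor i)
      (by rw [hspan]; exact Ideal.mem_span_singleton_self _)
  have hmap_dvd : ∀ i g, g ∈ tor i → (f i).map φ ∣ g.map φ := fun i g hg => by
    rw [← Ideal.mem_span_singleton, ← hspan]
    exact Ideal.mem_map_of_mem _ hg
  refine ⟨f, hf, fun i j hij => ?_, fun i => ⟨e i, hMfe i⟩,
    eq_span_of_map_dvd hφ hker hπ (fun i => mem_tor.mp (hf_tor i))
      (fun i g hg => hmap_dvd i g (mem_tor.mpr hg))⟩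
  exact dvd_of_isCoprime_of_map_dvd hφ hker hπ' (hfe i) (hMfe i ▸ ⟨e j, hMfe j⟩)
    (hmap_dvd j _ (tor_mono hij (hf_tor i)))

end Polynomial

theorem ZMod.ker_castHom_pow {p s : ℕ} (hs : s ≠ 0) :
    RingHom.ker (ZMod.castHom (dvd_pow_self p hs) (ZMod p)) = Ideal.span {(p : ZMod (p ^ s))} := by
  ext x
  obtain ⟨k, rfl⟩ := ZMod.intCast_surjective x
  rw [RingHom.mem_ker, map_intCast, ZMod.intCast_zmod_eq_zero_iff_dvd, Ideal.mem_span_singleton]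
  constructor
  · rintro ⟨m, rfl⟩
    exact ⟨m, by push_cast; ring⟩
  · rintro ⟨y, hy⟩
    obtain ⟨m, rfl⟩ := ZMod.intCast_surjective y
    have hdiff : ((k - p * m : ℤ) : ZMod (p ^ s)) = 0 := by
      push_cast
      rw [hy, sub_self]
    rw [ZMod.intCast_zmod_eq_zero_iff_dvd, Nat.cast_pow] at hdiff
    simpa using dvd_add ((dvd_pow_self (p : ℤ) hs).trans hdiff) (dvd_mul_right (p : ℤ) m)

/-- every ideal `C` of `ℤ_{p^s}[x]/⟨x^n − 1⟩` (with `p` prime, `s ≥ 1`,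
`gcd(n,p) = 1`) admits a generating set `{f_0, p f_1, …, p^{s-1} f_{s-1}}` with each `f_i`
monic and `f_{s-1} ∣ ⋯ ∣ f_1 ∣ f_0 ∣ x^n − 1` in `ℤ_{p^s}[x]`. -/
theorem cyclic_code_standard_generators (p s n : ℕ) (hp : p.Prime) (hs : 0 < s)
    (hn : Nat.Coprime n p)
    (C : Ideal (Polynomial (ZMod (p ^ s)) ⧸
      (Ideal.span {(X : Polynomial (ZMod (p ^ s))) ^ n - 1}))) :
    ∃ f : Fin s → Polynomial (ZMod (p ^ s)),
      (∀ i, (f i).Monic) ∧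
      (∀ i j : Fin s, i ≤ j → f j ∣ f i) ∧
      f ⟨0, hs⟩ ∣ (X : Polynomial (ZMod (p ^ s))) ^ n - 1 ∧
      C = Ideal.span (Set.range fun i : Fin s =>
        Ideal.Quotient.mk _ ((Polynomial.C ((p : ZMod (p ^ s)))) ^ (i : ℕ) * f i)) := by
  have : Fact p.Prime := ⟨hp⟩
  have hpn : ¬p ∣ n := (Nat.Prime.coprime_iff_not_dvd hp).mp hn.symm
  have hn0 : n ≠ 0 := by rintro rfl; exact hpn (dvd_zero p)
  set mk := Ideal.Quotient.mk (Ideal.span {(X : Polynomial (ZMod (p ^ s))) ^ n - 1})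
  have hM : ((X : (ZMod (p ^ s))[X]) ^ n - 1).Monic := by
    simpa using monic_X_pow_sub_C (1 : ZMod (p ^ s)) hn0
  have hsep : (((X : (ZMod (p ^ s))[X]) ^ n - 1).map
      (ZMod.castHom (dvd_pow_self p hs.ne') (ZMod p))).Separable := by
    simpa using separable_X_pow_sub_C' p n (1 : ZMod p) hpn one_ne_zero
  have hMJ : (X : (ZMod (p ^ s))[X]) ^ n - 1 ∈ C.comap mk := by
    rw [Ideal.mem_comap, Ideal.Quotient.eq_zero_iff_mem.mpr (Ideal.mem_span_singleton_self _)]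
    exact C.zero_mem
  obtain ⟨f, hf, hchain, hdvd, hspan⟩ := exists_monic_dvd_chain_span_eq
    (ZMod.ringHom_surjective _) (ZMod.ker_castHom_pow hs.ne')
    (by rw [← Nat.cast_pow, ZMod.natCast_self]) hM hsep hMJ
  refine ⟨fun i => f i, fun i => hf i, fun i j hij => hchain i j hij, hdvd 0, ?_⟩
  rw [← Ideal.map_comap_of_surjective mk Ideal.Quotient.mk_surjective C, hspan, Ideal.map_span,
    ← Set.range_comp]
  rfl
end
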